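/- Let A be an n×n matrix with entries in {0,1}, n ≥ 2. If the permanent of A is nonzero and every column of A contains at least two entries equal to 1, then the permanent of A is at least 2. -/

import Mathlib

/-!
Pick a permutation `σ` whose diagonal `A i (σ i)` has no zero entry. Every column `σ i` has a
second nonzero entry, in a row `f i ≠ i`. The fixed-point-free map `f` has a cycle, and
inverting `f` along its periodic points gives a permutation `π ≠ 1` with `f (π i) = i` wherever
`π` moves `i`. Then `σ * π` is a second permutation with nonzero diagonal, so `pm A ≥ 2`.
-/

/-- The permanent of a square matrix over ℕ. -/
def pm {n : ℕ} (A : Matrix (Fin n) (Fin n) ℕ) : ℕ :=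
  ∑ σ : Equiv.Perm (Fin n), ∏ i, A i (σ i)

open Finset Function Equiv

theorem Function.periodicPts_nonempty {α : Type*} [Finite α] [Nonempty α] (f : α → α) :
    (periodicPts f).Nonempty := by
  obtain ⟨x⟩ := ‹Nonempty α›
  obtain ⟨m, n, heq, hlt⟩ : ∃ m n, f^[m] x = f^[n] x ∧ m < n := by
    obtain ⟨m, n, hne, heq⟩ := Finite.exists_ne_map_eq_of_infinite (f^[·] x)
    rcases hne.lt_or_gt with h | h
    exacts [⟨m, n, heq, h⟩, ⟨n, m, heq.symm, h⟩]
  refine ⟨f^[m] x, mk_mem_periodicPts (Nat.sub_pos_of_lt hlt) ?_⟩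
  rw [IsPeriodicPt, IsFixedPt, ← iterate_add_apply, Nat.sub_add_cancel hlt.le, heq]

theorem Function.exists_perm_ne_one_rightInverse_on_support {α : Type*} [Finite α] [Nonempty α]
    {f : α → α} (hf : ∀ x, f x ≠ x) :
    ∃ π : Perm α, π ≠ 1 ∧ ∀ x, π x = x ∨ f (π x) = x := by
  classical
  set π := Perm.ofSubtype ((bijOn_periodicPts f).equiv f).symm
  have hinv : ∀ x ∈ periodicPts f, f (π x) = x := fun x hx => by
    rw [Perm.ofSubtype_apply_of_mem _ hx]
    exact congrArg Subtype.val (((bijOn_periodicPts f).equiv f).apply_symm_apply ⟨x, hx⟩)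
  refine ⟨π, fun h => ?_, fun x => ?_⟩
  · obtain ⟨x, hx⟩ := periodicPts_nonempty f
    exact hf x (by simpa [h] using hinv x hx)
  · by_cases hx : x ∈ periodicPts f
    exacts [.inr (hinv x hx), .inl (Perm.ofSubtype_apply_of_not_mem _ hx)]

variable {n : ℕ} {A : Matrix (Fin n) (Fin n) ℕ}

theorem exists_perm_forall_ne_zero_of_pm_ne_zero (hperm : pm A ≠ 0) :
    ∃ σ : Perm (Fin n), ∀ i, A i (σ i) ≠ 0 := by
  obtain ⟨σ, -, hσ⟩ := exists_ne_zero_of_sum_ne_zero hperm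
  exact ⟨σ, fun i => prod_ne_zero_iff.mp hσ i (mem_univ i)⟩

theorem two_le_pm_of_perm_ne {σ τ : Perm (Fin n)} (hne : σ ≠ τ)
    (hσ : ∀ i, A i (σ i) ≠ 0) (hτ : ∀ i, A i (τ i) ≠ 0) : 2 ≤ pm A := by
  have hpos : ∀ ρ : Perm (Fin n), (∀ i, A i (ρ i) ≠ 0) → 1 ≤ ∏ i, A i (ρ i) :=
    fun ρ hρ => Nat.one_le_iff_ne_zero.mpr (prod_ne_zero_iff.mpr fun i _ => hρ i)
  calc 2 ≤ ∑ ρ ∈ {σ, τ}, ∏ i, A i (ρ i) := by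
        rw [sum_pair hne]; exact Nat.add_le_add (hpos σ hσ) (hpos τ hτ)
    _ ≤ pm A := sum_le_sum_of_subset (subset_univ _)

theorem two_le_pm_of_one_lt_card_col_ne_zero [NeZero n] (hperm : pm A ≠ 0)
    (hcol : ∀ j, 1 < #{i | A i j ≠ 0}) : 2 ≤ pm A := by
  obtain ⟨σ, hσ⟩ := exists_perm_forall_ne_zero_of_pm_ne_zero hperm
  have hsecond : ∀ i, ∃ i', i' ≠ i ∧ A i' (σ i) ≠ 0 := fun i => by
    obtain ⟨i', hi', hne⟩ := exists_mem_ne (hcol (σ i)) i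
    exact ⟨i', hne, (mem_filter.mp hi').2⟩
  choose f hf_ne hf using hsecond
  obtain ⟨π, hπ, hπf⟩ := exists_perm_ne_one_rightInverse_on_support hf_ne
  refine two_le_pm_of_perm_ne (τ := σ * π) (fun h => hπ (mul_eq_left.mp h.symm)) hσ fun i => ?_
  rw [Perm.mul_apply]
  rcases hπf i with hi | hi
  · rw [hi]; exact hσ i
  · simpa only [hi] using hf (π i)

theorem stmt1_general (n : ℕ) (hn : 2 ≤ n) (A : Matrix (Fin n) (Fin n) ℕ)
    (hperm : pm A ≠ 0)
    (hcol : ∀ j, 2 ≤ (Finset.univ.filter (fun i => A i j = 1)).card) :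
    2 ≤ pm A := by
  have : NeZero n := ⟨by omega⟩
  refine two_le_pm_of_one_lt_card_col_ne_zero hperm fun j => (hcol j).trans ?_
  exact card_le_card (monotone_filter_right _ fun _ _ h => h ▸ one_ne_zero)

/-- A binary n×n matrix (n ≥ 2) with nonzero permanent in which every column
contains at least two entries equal to 1 has permanent at least 2. -/
theorem stmt1 (n : ℕ) (hn : 2 ≤ n) (A : Matrix (Fin n) (Fin n) ℕ)
    (hbin : ∀ i j, A i j = 0 ∨ A i j = 1)
    (hperm : pm A ≠ 0)
    (hcol : ∀ j, 2 ≤ (Finset.univ.filter (fun i => A i j = 1)).card) :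
    2 ≤ pm A :=
  stmt1_general n hn A hperm hcol
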